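/- (Lemma 2(ii)-4) If Φ is a maximal consistent set of formulas of propositional Łukasiewicz logic, then for every formula φ there exists a positive integer n such that either the n-fold strong conjunction φ & ⋯ & φ (n times) belongs to Φ, or its negation ¬(φ & ⋯ & φ) (n times) belongs to Φ. -/

import Mathlib

/-- Formulas of propositional Łukasiewicz logic: propositional variables,
the constant `⊥`, strong conjunction `&` and implication `→`. -/
inductive LFormula : Type
  | var : ℕ → LFormula
  | bot : LFormula
  | conj : LFormula → LFormula → LFormula
  | impl : LFormula → LFormula → LFormula

namespace LFormula

/-- Negation is the abbreviation `¬φ := φ → ⊥`. -/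
def neg (φ : LFormula) : LFormula := impl φ bot

end LFormula

/-- Hilbert-style provability for Łukasiewicz logic `Ł` from a set of premises:
modus ponens together with the axiom schemes (A1)–(A7) and double negation. -/
inductive LProof : Set LFormula → LFormula → Prop
  | prem {Γ : Set LFormula} {φ : LFormula} : φ ∈ Γ → LProof Γ φ
  | a1 {Γ : Set LFormula} (φ ψ χ : LFormula) :
      LProof Γ ((φ.impl ψ).impl ((ψ.impl χ).impl (φ.impl χ)))
  | a2 {Γ : Set LFormula} (φ ψ : LFormula) : LProof Γ ((φ.conj ψ).impl φ)
  | a3 {Γ : Set LFormula} (φ ψ : LFormula) : LProof Γ ((φ.conj ψ).impl (ψ.conj φ))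
  | a4 {Γ : Set LFormula} (φ ψ : LFormula) :
      LProof Γ ((φ.conj (φ.impl ψ)).impl (ψ.conj (ψ.impl φ)))
  | a5a {Γ : Set LFormula} (φ ψ χ : LFormula) :
      LProof Γ ((φ.impl (ψ.impl χ)).impl ((φ.conj ψ).impl χ))
  | a5b {Γ : Set LFormula} (φ ψ χ : LFormula) :
      LProof Γ (((φ.conj ψ).impl χ).impl (φ.impl (ψ.impl χ)))
  | a6 {Γ : Set LFormula} (φ ψ χ : LFormula) :
      LProof Γ (((φ.impl ψ).impl χ).impl (((ψ.impl φ).impl χ).impl χ))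
  | a7 {Γ : Set LFormula} (φ : LFormula) : LProof Γ (LFormula.bot.impl φ)
  | dn {Γ : Set LFormula} (φ : LFormula) : LProof Γ (φ.neg.neg.impl φ)
  | mp {Γ : Set LFormula} {φ ψ : LFormula} :
      LProof Γ (φ.impl ψ) → LProof Γ φ → LProof Γ ψ

/-- `listConj φ [ψ₁, …, ψₙ]` is the strong conjunction `φ & ψ₁ & ⋯ & ψₙ`. -/
def listConj : LFormula → List LFormula → LFormula
  | φ, [] => φ
  | φ, ψ :: l => LFormula.conj φ (listConj ψ l)

/-- A set `Γ` is consistent if for every finite nonempty collection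
`φ, ψ₁, …, ψₙ` of its members, `⊬ ¬(φ & ψ₁ & ⋯ & ψₙ)`. -/
def Consistent (Γ : Set LFormula) : Prop :=
  ∀ (φ : LFormula) (l : List LFormula), φ ∈ Γ → (∀ ψ ∈ l, ψ ∈ Γ) →
    ¬ LProof ∅ (listConj φ l).neg

/-- A consistent set `Φ` is maximal if adjoining any formula `ψ ∉ Φ`
yields an inconsistent set. -/
def MaximalConsistent (Φ : Set LFormula) : Prop :=
  Consistent Φ ∧ ∀ ψ : LFormula, ψ ∉ Φ → ¬ Consistent (Φ ∪ {ψ})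

/-- Evaluation of formulas in `[0,1]` determined by the values `π` of the
propositional variables. -/
def eval (π : ℕ → ℝ) : LFormula → ℝ
  | LFormula.var p => π p
  | LFormula.bot => 0
  | LFormula.conj φ ψ => max 0 (eval π φ + eval π ψ - 1)
  | LFormula.impl φ ψ => min 1 (1 - eval π φ + eval π ψ)

/-- A valuation assigns each propositional variable a value in `[0,1]`. -/
def IsValuation (π : ℕ → ℝ) : Prop := ∀ p : ℕ, 0 ≤ π p ∧ π p ≤ 1

/-- `iterConj φ n` is the `(n+1)`-fold strong conjunction `φ & ⋯ & φ`. -/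
def iterConj (φ : LFormula) : ℕ → LFormula
  | 0 => φ
  | n + 1 => φ.conj (iterConj φ n)

/-!
Łukasiewicz logic satisfies the local deduction theorem: `Γ ∪ {ψ} ⊢ χ` iff `Γ ⊢ ψⁿ → χ`
for some power `ψⁿ = ψ & ⋯ & ψ`. Consistency of a set is underivability of `⊥` from it, so a
maximal consistent set `Φ` is closed under derivability. If `φ ∉ Φ`, then `Φ ∪ {φ} ⊢ ⊥`, hence
`Φ ⊢ ¬φⁿ` for some `n`, and so `¬φⁿ ∈ Φ`.
-/

open LFormula

namespace LProof

variable {Γ : Set LFormula}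

theorem closure_induction {P : LFormula → Prop} (hprem : ∀ φ ∈ Γ, P φ)
    (hthm : ∀ φ, (∀ Δ, LProof Δ φ) → P φ) (hmp : ∀ φ ψ, P (φ.impl ψ) → P φ → P ψ)
    {χ : LFormula} (h : LProof Γ χ) : P χ := by
  induction h with
  | prem hφ => exact hprem _ hφ
  | mp _ _ ih₁ ih₂ => exact hmp _ _ ih₁ ih₂
  | a1 => exact hthm _ fun _ => a1 ..
  | a2 => exact hthm _ fun _ => a2 ..
  | a3 => exact hthm _ fun _ => a3 ..
  | a4 => exact hthm _ fun _ => a4 ..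
  | a5a => exact hthm _ fun _ => a5a ..
  | a5b => exact hthm _ fun _ => a5b ..
  | a6 => exact hthm _ fun _ => a6 ..
  | a7 => exact hthm _ fun _ => a7 ..
  | dn => exact hthm _ fun _ => dn ..

theorem mono {Δ : Set LFormula} {φ : LFormula} (h : LProof Γ φ) (hΓ : Γ ⊆ Δ) : LProof Δ φ :=
  closure_induction (fun _ hφ => prem (hΓ hφ)) (fun _ hφ => hφ Δ) (fun _ _ => mp) h

theorem impl_trans {a b c : LFormula} (h₁ : LProof Γ (a.impl b)) (h₂ : LProof Γ (b.impl c)) :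
    LProof Γ (a.impl c) :=
  mp (mp (a1 a b c) h₁) h₂

theorem curry {a b c : LFormula} (h : LProof Γ ((a.conj b).impl c)) :
    LProof Γ (a.impl (b.impl c)) :=
  mp (a5b a b c) h

theorem uncurry {a b c : LFormula} (h : LProof Γ (a.impl (b.impl c))) :
    LProof Γ ((a.conj b).impl c) :=
  mp (a5a a b c) h

theorem impl_intro (a b : LFormula) : LProof Γ (a.impl (b.impl a)) :=
  curry (a2 a b)

theorem impl_swap (a b c : LFormula) :
    LProof Γ ((a.impl (b.impl c)).impl (b.impl (a.impl c))) :=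
  impl_trans (impl_trans (a5a a b c) (mp (a1 _ _ c) (a3 b a))) (a5b b a c)

theorem swap {a b c : LFormula} (h : LProof Γ (a.impl (b.impl c))) :
    LProof Γ (b.impl (a.impl c)) :=
  mp (impl_swap a b c) h

theorem impl_self (a : LFormula) : LProof Γ (a.impl a) :=
  mp (swap (impl_intro a ((a.conj a).impl a))) (a2 a a)

theorem impl_impl_conj (a b : LFormula) : LProof Γ (a.impl (b.impl (a.conj b))) :=
  curry (impl_self _)

theorem conj_intro {a b : LFormula} (ha : LProof Γ a) (hb : LProof Γ b) : LProof Γ (a.conj b) :=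
  mp (mp (impl_impl_conj a b) ha) hb

theorem conj_mono {a a' b b' : LFormula} (ha : LProof Γ (a.impl a'))
    (hb : LProof Γ (b.impl b')) : LProof Γ ((a.conj b).impl (a'.conj b')) :=
  uncurry (swap (impl_trans hb (swap (impl_trans ha (impl_impl_conj a' b')))))

theorem conj_assoc_impl (a b c : LFormula) :
    LProof Γ ((a.conj (b.conj c)).impl ((a.conj b).conj c)) :=
  uncurry (swap (uncurry (impl_trans (swap (curry (curry (impl_self _)))) (impl_swap a c _))))

theorem conj_impl_of_impl_impl {a b c d : LFormula} (hcd : LProof Γ (a.impl (c.impl d)))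
    (hc : LProof Γ (b.impl c)) : LProof Γ ((a.conj b).impl d) :=
  uncurry (impl_trans hcd (mp (a1 b c d) hc))

theorem iterConj_intro {a : LFormula} (h : LProof Γ a) : ∀ n, LProof Γ (iterConj a n)
  | 0 => h
  | n + 1 => conj_intro h (iterConj_intro h n)

theorem iterConj_add_impl (a : LFormula) (n : ℕ) :
    ∀ m, LProof Γ ((iterConj a (n + m + 1)).impl ((iterConj a m).conj (iterConj a n)))
  | 0 => impl_self _
  | m + 1 => impl_trans (conj_mono (impl_self a) (iterConj_add_impl a n m)) (conj_assoc_impl ..)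

theorem listConj_intro {ψ : LFormula} {l : List LFormula} (hψ : LProof Γ ψ)
    (hl : ∀ τ ∈ l, LProof Γ τ) : LProof Γ (listConj ψ l) := by
  induction l generalizing ψ with
  | nil => exact hψ
  | cons τ l ih =>
    exact conj_intro hψ (ih (hl τ List.mem_cons_self) fun σ hσ => hl σ (List.mem_cons_of_mem τ hσ))

theorem listConj_append_impl (ψ χ : LFormula) (l l' : List LFormula) :
    LProof Γ ((listConj ψ (l ++ χ :: l')).impl ((listConj ψ l).conj (listConj χ l'))) := by
  induction l generalizing ψ with
  | nil => exact impl_self _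
  | cons τ l ih => exact impl_trans (conj_mono (impl_self ψ) (ih τ)) (conj_assoc_impl ..)

/-- Local deduction theorem. -/
theorem exists_iterConj_impl_of_union_singleton {ψ χ : LFormula} (h : LProof (Γ ∪ {ψ}) χ) :
    ∃ n, LProof Γ ((iterConj ψ n).impl χ) := by
  refine closure_induction (P := fun χ => ∃ n, LProof Γ ((iterConj ψ n).impl χ))
    (fun φ hφ => ?_) (fun φ hφ => ⟨0, mp (impl_intro φ ψ) (hφ Γ)⟩) (fun φ χ ih₁ ih₂ => ?_) h
  · rcases hφ with hφ | rfl
    exacts [⟨0, mp (impl_intro φ ψ) (prem hφ)⟩, ⟨0, impl_self φ⟩]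
  · obtain ⟨m, hm⟩ := ih₁
    obtain ⟨n, hn⟩ := ih₂
    exact ⟨n + m + 1, impl_trans (iterConj_add_impl ψ n m) (conj_impl_of_impl_impl hm hn)⟩

theorem exists_listConj_impl {θ χ : LFormula} (hθ : θ ∈ Γ) (h : LProof Γ χ) :
    ∃ ψ l, ψ ∈ Γ ∧ (∀ τ ∈ l, τ ∈ Γ) ∧ LProof ∅ ((listConj ψ l).impl χ) := by
  refine closure_induction
    (P := fun χ => ∃ ψ l, ψ ∈ Γ ∧ (∀ τ ∈ l, τ ∈ Γ) ∧ LProof ∅ ((listConj ψ l).impl χ))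
    (fun φ hφ => ⟨φ, [], hφ, by simp, impl_self φ⟩)
    (fun φ hφ => ⟨θ, [], hθ, by simp, mp (impl_intro φ θ) (hφ ∅)⟩) (fun φ χ ih₁ ih₂ => ?_) h
  obtain ⟨ψ, l, hψ, hl, h₁⟩ := ih₁
  obtain ⟨ψ', l', hψ', hl', h₂⟩ := ih₂
  refine ⟨ψ, l ++ ψ' :: l', hψ, ?_, ?_⟩
  · simp only [List.mem_append, List.mem_cons]
    rintro τ (hτ | rfl | hτ)
    exacts [hl τ hτ, hψ', hl' τ hτ]
  · exact impl_trans (listConj_append_impl ..) (conj_impl_of_impl_impl h₁ h₂)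

end LProof

def LFormula.evalBool (π : ℕ → Bool) : LFormula → Bool
  | var p => π p
  | bot => false
  | conj a b => evalBool π a && evalBool π b
  | impl a b => !evalBool π a || evalBool π b

theorem LProof.evalBool_eq_true (π : ℕ → Bool) {φ : LFormula} (h : LProof ∅ φ) :
    φ.evalBool π = true := by
  induction h with
  | prem h => exact absurd h (Set.notMem_empty _)
  | mp _ _ ih₁ ih₂ => simp_all [evalBool]
  | _ => simp only [evalBool, neg]; grind

theorem not_lproof_empty_bot : ¬ LProof ∅ bot := fun h =>
  absurd (h.evalBool_eq_true fun _ => false) (by simp [evalBool])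

theorem consistent_iff_not_lproof_bot {Γ : Set LFormula} : Consistent Γ ↔ ¬ LProof Γ bot := by
  constructor
  · intro hΓ h
    obtain rfl | ⟨θ, hθ⟩ := Γ.eq_empty_or_nonempty
    · exact not_lproof_empty_bot h
    · obtain ⟨ψ, l, hψ, hl, hbot⟩ := LProof.exists_listConj_impl hθ h
      exact hΓ ψ l hψ hl hbot
  · intro h ψ l hψ hl hneg
    exact h (.mp (hneg.mono (Set.empty_subset Γ))
      (.listConj_intro (.prem hψ) fun τ hτ => .prem (hl τ hτ)))

namespace MaximalConsistent

theorem exists_lproof_iterConj_neg {Φ : Set LFormula} (h : MaximalConsistent Φ) {χ : LFormula}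
    (hχ : χ ∉ Φ) : ∃ n, LProof Φ (iterConj χ n).neg :=
  LProof.exists_iterConj_impl_of_union_singleton
    (not_not.mp (mt consistent_iff_not_lproof_bot.mpr (h.2 χ hχ)))

theorem mem_of_lproof {Φ : Set LFormula} (h : MaximalConsistent Φ) {χ : LFormula}
    (hχ : LProof Φ χ) : χ ∈ Φ := by
  by_contra hχΦ
  obtain ⟨n, hn⟩ := h.exists_lproof_iterConj_neg hχΦ
  exact consistent_iff_not_lproof_bot.mp h.1 (.mp hn (hχ.iterConj_intro n))

end MaximalConsistent

/-- (Lemma 2(ii)-4) For every formula `φ` there is a positive number of copies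
`n` such that the `n`-fold conjunction `φ & ⋯ & φ` or its negation is in `Φ`. -/
theorem maximal_iter_conj_or_neg (Φ : Set LFormula) (h : MaximalConsistent Φ)
    (φ : LFormula) :
    ∃ n : ℕ, iterConj φ n ∈ Φ ∨ (iterConj φ n).neg ∈ Φ := by
  by_cases hφ : φ ∈ Φ
  · exact ⟨0, .inl hφ⟩
  obtain ⟨n, hn⟩ := h.exists_lproof_iterConj_neg hφ
  exact ⟨n, .inr (h.mem_of_lproof hn)⟩
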